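/- arXiv:2406.06797 — 7 statements merged into one kernel-verified Lean document; each statement's English description precedes it below -/
import Mathlib

section
/- For all complex numbers a, b and all integers n ≥ 0, m ≥ 0: Σ_{k=0}^{n} C(n,k) a^k b^{n−k} H_k(m) = Σ_{j=0}^{m} C(m,j) Σ_{k=0}^{n} H_k(j) (a+b)^k · ((m−j)!/(n−k)!) · (−1)^{n−k} b^{n−k} s(n−k, m−j), where s(n,k) are the Stirling numbers of the first kind (the terms with n−k < m−j vanish since then s(n−k, m−j) = 0). -/
open Finset

/-- Multiple harmonic-like numbers `H_n(m)`: the sum of `1/(k_1 ⋯ k_m)` over all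
`m`-tuples of positive integers with `k_1 + ⋯ + k_m ≤ n`. -/
def Hml (n m : ℕ) : ℚ :=
  ∑ k ∈ (Fintype.piFinset fun _ : Fin m => Finset.Icc 1 n).filter
      (fun k => ∑ i, k i ≤ n),
    ∏ i, (1 : ℚ) / (k i : ℚ)

/-- The `n`-th harmonic number. -/
def harm (n : ℕ) : ℚ := ∑ j ∈ Finset.Icc 1 n, (1 : ℚ) / (j : ℚ)

/-- The `n`-th second-order harmonic number. -/
def harm2 (n : ℕ) : ℚ := ∑ j ∈ Finset.Icc 1 n, (1 : ℚ) / (j : ℚ) ^ 2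

/-- The `n`-th odd harmonic number. -/
def oddharm (n : ℕ) : ℚ := ∑ k ∈ Finset.Icc 1 n, (1 : ℚ) / (2 * (k : ℚ) - 1)

/-- Signed Stirling numbers of the first kind. -/
def stirlingFirst : ℕ → ℕ → ℤ
  | 0, 0 => 1
  | 0, _ + 1 => 0
  | _ + 1, 0 => 0
  | n + 1, k + 1 => stirlingFirst n k - n * stirlingFirst n (k + 1)

/-- Generalized binomial coefficient `C(r, k) = r(r−1)⋯(r−k+1)/k!`. -/
noncomputable def gchoose (r : ℂ) (k : ℕ) : ℂ :=
  (∏ i ∈ Finset.range k, (r - i)) / (k.factorial : ℂ)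

/-!
With `L = -log (1 - X)` one has `∑ₙ H_n(m) Xⁿ = L^m / (1 - X)`, and the left-hand side is the
`n`-th coefficient of the Euler transform `f (a X / (1 - b X)) / (1 - b X)` of this series.
Since `1 - a X / (1 - b X) = (1 - (a + b) X) / (1 - b X)`, the transform is
`(L((a + b) X) - L(b X))^m / (1 - (a + b) X)`. Expanding the `m`-th power binomially and using
`log (1 + X)^k = k! ∑ᵣ s(r, k) Xʳ / r!` at `X ↦ -b X` gives the right-hand side.
-/

open PowerSeries

lemma Hml_zero_right (n : ℕ) : Hml n 0 = 1 := by
  simp [Hml]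

lemma Hml_succ_right (n m : ℕ) :
    Hml n (m + 1) = ∑ t ∈ Icc 1 n, (t : ℚ)⁻¹ * Hml (n - t) m := by
  have le_sum (k : Fin m → ℕ) (i : Fin m) : k i ≤ ∑ j, k j :=
    single_le_sum (fun j _ => Nat.zero_le (k j)) (mem_univ i)
  simp only [Hml, mul_sum, sum_sigma']
  refine sum_nbij' (fun k => ⟨k 0, Fin.tail k⟩) (fun p => Fin.cons p.1 p.2)
    ?_ ?_ (fun k _ => Fin.cons_self_tail k) (fun p _ => by simp) ?_
  · intro k hk
    simp only [Fintype.mem_piFinset, mem_Icc, mem_sigma, mem_filter, Fin.sum_univ_succ] at hk ⊢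
    have := le_sum (Fin.tail k)
    exact ⟨hk.1 0, fun i => ⟨hk.1 i.succ |>.1, by grind [Fin.tail]⟩, by grind [Fin.tail]⟩
  · rintro ⟨t, k⟩ hk
    simp only [Fintype.mem_piFinset, mem_Icc, mem_sigma, mem_filter, Fin.sum_cons] at hk ⊢
    refine ⟨fun i => Fin.cases ?_ (fun j => ?_) i, by omega⟩ <;> simp <;> grind
  · intro k _
    simp [Fin.prod_univ_succ, Fin.tail, mul_comm]

lemma stirlingFirst_succ_succ (n k : ℕ) :
    stirlingFirst (n + 1) (k + 1) = stirlingFirst n k - n * stirlingFirst n (k + 1) := rfl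

section CommRing

variable {R : Type*} [CommRing R]

lemma rescale_mk_one_mul_one_sub (c : R) :
    rescale c (PowerSeries.mk 1) * (1 - C c * X) = 1 := by
  simpa [rescale_X] using congrArg (rescale c) (mk_one_mul_one_sub_eq_one (S := R))

lemma derivative_X_mul_rescale_mk_one (c : R) :
    d⁄dX R (X * rescale c (PowerSeries.mk 1)) = rescale c (PowerSeries.mk 1) ^ 2 := by
  ext n
  rw [coeff_derivative, coeff_succ_X_mul, ← map_pow, coeff_rescale, coeff_rescale,
    mk_one_pow_eq_mk_choose_add (S := R) (d := 1)]
  simp [add_comm]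

lemma coeff_one_add_X_mul_derivative (f : R⟦X⟧) (n : ℕ) :
    coeff n ((1 + X) * d⁄dX R f) = coeff (n + 1) f * (n + 1) + coeff n f * n := by
  rw [add_mul, one_mul, map_add, coeff_derivative]
  cases n with
  | zero => simp
  | succ n => rw [coeff_succ_X_mul, coeff_derivative]; push_cast; ring

variable (a b : R)

/-- The series of `a X / (1 - b X)`. -/
noncomputable def eulerSubst : R⟦X⟧ := C a * X * rescale b (PowerSeries.mk 1)

lemma constantCoeff_eulerSubst : constantCoeff (eulerSubst a b) = 0 := by
  simp [eulerSubst]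

lemma hasSubst_eulerSubst : HasSubst (eulerSubst a b) :=
  HasSubst.of_constantCoeff_zero' (constantCoeff_eulerSubst a b)

lemma coeff_eulerSubst_pow_of_lt {d j : ℕ} (h : j < d) : coeff j (eulerSubst a b ^ d) = 0 := by
  rw [eulerSubst, mul_comm (C a), mul_assoc, mul_pow, coeff_X_pow_mul', if_neg (by omega)]

lemma coeff_rescale_mk_one_mul_eulerSubst_pow (k n : ℕ) :
    coeff n (rescale b (PowerSeries.mk 1) * eulerSubst a b ^ k) =
      n.choose k * a ^ k * b ^ (n - k) := by
  have : rescale b (PowerSeries.mk 1) * eulerSubst a b ^ k =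
      C (a ^ k) * (X ^ k * rescale b (PowerSeries.mk 1 ^ (k + 1))) := by
    simp only [eulerSubst, map_pow]
    ring
  rw [this, coeff_C_mul, coeff_X_pow_mul', mk_one_pow_eq_mk_choose_add, coeff_rescale, coeff_mk]
  split_ifs with h
  · rw [Nat.add_sub_cancel' h]
    ring
  · simp [Nat.choose_eq_zero_of_lt (not_le.mp h)]

lemma derivative_eulerSubst :
    d⁄dX R (eulerSubst a b) = C a * rescale b (PowerSeries.mk 1) ^ 2 := by
  rw [eulerSubst, mul_assoc, Derivation.leibniz, derivative_X_mul_rescale_mk_one, derivative_C,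
    smul_zero, add_zero, smul_eq_mul]

lemma coeff_subst_eulerSubst {j n : ℕ} (h : j ≤ n) (f : R⟦X⟧) :
    coeff j (f.subst (eulerSubst a b)) =
      ∑ d ∈ range (n + 1), coeff d f * coeff j (eulerSubst a b ^ d) := by
  rw [coeff_subst' (hasSubst_eulerSubst a b)]
  refine finsum_eq_sum_of_support_subset _ fun d hd => ?_
  by_contra hdn
  simp only [coe_range, Set.mem_Iio, not_lt] at hdn
  simp [coeff_eulerSubst_pow_of_lt a b (show j < d by omega)] at hd

lemma coeff_rescale_mk_one_mul_subst_eulerSubst (f : R⟦X⟧) (n : ℕ) :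
    coeff n (rescale b (PowerSeries.mk 1) * f.subst (eulerSubst a b)) =
      ∑ k ∈ range (n + 1), n.choose k * a ^ k * b ^ (n - k) * coeff k f := by
  rw [coeff_mul, sum_congr rfl fun p hp => by
    rw [coeff_subst_eulerSubst a b (n := n) (HasAntidiagonal.antidiagonal.snd_le hp),
      mul_sum], sum_comm]
  refine sum_congr rfl fun k _ => ?_
  rw [← coeff_rescale_mk_one_mul_eulerSubst_pow, coeff_mul, sum_mul]
  exact sum_congr rfl fun p _ => by ring

lemma rescale_mk_one_mul_subst_eulerSubst :
    rescale b (PowerSeries.mk 1) * (PowerSeries.mk 1 : R⟦X⟧).subst (eulerSubst a b) =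
      rescale (a + b) (PowerSeries.mk 1 : R⟦X⟧) := by
  have hsubst :
      (PowerSeries.mk 1 : R⟦X⟧).subst (eulerSubst a b) * (1 - eulerSubst a b) = 1 := by
    simpa [← coe_substAlgHom (hasSubst_eulerSubst a b), substAlgHom_X] using
      congrArg (substAlgHom (hasSubst_eulerSubst a b)) (mk_one_mul_one_sub_eq_one (S := R))
  have hb := rescale_mk_one_mul_one_sub b
  have hc := rescale_mk_one_mul_one_sub (a + b)
  -- `(1 - a X / (1 - b X)) (1 - b X) = 1 - (a + b) X`
  refine (IsUnit.of_mul_eq_one_right _ hc).mul_right_cancel ?_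
  set S := (PowerSeries.mk 1 : R⟦X⟧).subst (eulerSubst a b)
  rw [hc, eulerSubst, map_add] at *
  linear_combination S * hb + hsubst

end CommRing

section Field

variable {K : Type*} [Field K] [CharZero K]

/-- Since `(0 : K)⁻¹ = 0`, this is `-log (1 - X) = ∑_{n ≥ 1} Xⁿ / n`. -/
noncomputable def negLogOneSub : K⟦X⟧ := PowerSeries.mk fun n => (n : K)⁻¹

lemma constantCoeff_negLogOneSub : constantCoeff (negLogOneSub : K⟦X⟧) = 0 := by
  simp [negLogOneSub, ← coeff_zero_eq_constantCoeff_apply]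

lemma derivative_negLogOneSub : d⁄dX K (negLogOneSub : K⟦X⟧) = PowerSeries.mk 1 := by
  ext n
  simp [negLogOneSub, coeff_derivative]
  field_simp

lemma derivative_rescale_negLogOneSub (c : K) :
    d⁄dX K (rescale c negLogOneSub) = C c * rescale c (PowerSeries.mk 1) := by
  ext n
  simp [negLogOneSub, coeff_derivative, coeff_rescale, pow_succ]
  field_simp

lemma mk_Hml (m : ℕ) :
    (PowerSeries.mk fun n => (Hml n m : K)) = negLogOneSub ^ m * PowerSeries.mk 1 := by
  induction m with
  | zero => ext n; simp [Hml_zero_right]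
  | succ m ih =>
    ext n
    rw [pow_succ', mul_assoc, ← ih, coeff_mul, Nat.sum_antidiagonal_eq_sum_range_succ_mk]
    simp only [coeff_mk, negLogOneSub, Hml_succ_right, Rat.cast_sum, Rat.cast_mul, Rat.cast_inv,
      Rat.cast_natCast]
    refine sum_subset (fun t ht => by simp at ht ⊢; omega) fun t ht hnt => ?_
    obtain rfl : t = 0 := by simp at ht hnt; omega
    simp

lemma negLogOneSub_subst_eulerSubst (a b : K) :
    (negLogOneSub : K⟦X⟧).subst (eulerSubst a b) =
      rescale (a + b) negLogOneSub - rescale b (negLogOneSub : K⟦X⟧) := by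
  have hφ := hasSubst_eulerSubst a b
  refine derivative.ext ?_ ?_
  · rw [derivative_subst hφ, derivative_negLogOneSub, map_sub, derivative_rescale_negLogOneSub,
      derivative_rescale_negLogOneSub, derivative_eulerSubst]
    have hsubst := rescale_mk_one_mul_subst_eulerSubst a b
    have hb := rescale_mk_one_mul_one_sub b
    have hc := rescale_mk_one_mul_one_sub (a + b)
    -- both derivatives equal `a / ((1 - b X) (1 - (a + b) X))`
    refine ((IsUnit.of_mul_eq_one_right _ hb).mul
      (IsUnit.of_mul_eq_one_right _ hc)).mul_right_cancel ?_
    set g := rescale b (PowerSeries.mk 1 : K⟦X⟧)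
    rw [map_add] at *
    linear_combination (C a * g * (1 - C b * X) * (1 - (C a + C b) * X)) * hsubst +
      (C a * g * (1 - C b * X) - (C a + C b) * (1 - C b * X)) * hc +
      (C a + C b * (1 - (C a + C b) * X)) * hb
  · rw [map_sub, show constantCoeff ((negLogOneSub : K⟦X⟧).subst (eulerSubst a b)) = 0 from
      constantCoeff_subst_eq_zero (constantCoeff_eulerSubst a b) _ constantCoeff_negLogOneSub]
    simp [← coeff_zero_eq_constantCoeff_apply, coeff_rescale, negLogOneSub]

lemma rescale_neg_one_log : rescale (-1) (log K) = -negLogOneSub := by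
  ext (_ | n)
  · simp [negLogOneSub]
  · simp [negLogOneSub, pow_succ, ← mul_div_assoc, ← mul_pow, neg_div]

lemma one_add_X_mul_derivative_log : (1 + X) * d⁄dX K (log K) = 1 := by
  ext n
  rw [coeff_one_add_X_mul_derivative]
  cases n with
  | zero => simp
  | succ n =>
    have h : (n : K) + 1 + 1 ≠ 0 := by norm_cast
    have h' : (n : K) + 1 ≠ 0 := by norm_cast
    simp [pow_succ, h, h']

lemma log_pow_eq_mk_stirlingFirst (k : ℕ) :
    log K ^ k = PowerSeries.mk fun r => (k.factorial : K) / r.factorial * stirlingFirst r k := by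
  induction k with
  | zero => ext (_ | r) <;> simp [stirlingFirst, coeff_one]
  | succ k ih =>
    have hunit : IsUnit (1 + X : K⟦X⟧) := by simp [isUnit_iff_constantCoeff]
    refine derivative.ext (hunit.mul_left_cancel ?_) ?_
    · rw [Derivation.leibniz_pow, smul_eq_mul, mul_smul_comm, mul_left_comm,
        one_add_X_mul_derivative_log, mul_one, Nat.add_sub_cancel, ih]
      ext n
      rw [map_nsmul, coeff_one_add_X_mul_derivative]
      simp only [coeff_mk, nsmul_eq_mul, stirlingFirst_succ_succ, Nat.factorial_succ]
      push_cast
      field_simp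
      ring
    · rw [map_pow, constantCoeff_log, ← coeff_zero_eq_constantCoeff_apply]
      simp [stirlingFirst]

end Field

theorem stmt_1 (a b : ℂ) (n m : ℕ) :
    ∑ k ∈ Finset.range (n + 1),
        (n.choose k : ℂ) * a ^ k * b ^ (n - k) * (Hml k m : ℂ) =
      ∑ j ∈ Finset.range (m + 1), (m.choose j : ℂ) *
        ∑ k ∈ Finset.range (n + 1),
          (Hml k j : ℂ) * (a + b) ^ k *
            (((m - j).factorial : ℂ) / ((n - k).factorial : ℂ)) *
            (-1) ^ (n - k) * b ^ (n - k) * (stirlingFirst (n - k) (m - j) : ℂ) := by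
  have key : rescale b (PowerSeries.mk 1) * (PowerSeries.mk fun k => (Hml k m : ℂ)).subst
      (eulerSubst a b) = ∑ j ∈ range (m + 1), C (m.choose j : ℂ) *
        (rescale (a + b) (negLogOneSub ^ j * PowerSeries.mk 1) *
          rescale (-b) (log ℂ ^ (m - j))) := by
    rw [mk_Hml, ← coe_substAlgHom (hasSubst_eulerSubst a b), map_mul, map_pow, coe_substAlgHom,
      negLogOneSub_subst_eulerSubst, mul_left_comm, rescale_mk_one_mul_subst_eulerSubst,
      sub_eq_add_neg, add_pow, sum_mul]
    refine sum_congr rfl fun j _ => ?_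
    rw [show -b = -1 * b by ring, ← rescale_rescale, map_pow (rescale (-1)), rescale_neg_one_log,
      map_mul, map_pow, map_pow, map_neg, map_natCast]
    ring
  have hcoeff := congrArg (coeff n) key
  rw [coeff_rescale_mk_one_mul_subst_eulerSubst, map_sum] at hcoeff
  simp only [coeff_mk] at hcoeff
  rw [hcoeff]
  refine sum_congr rfl fun j _ => ?_
  rw [coeff_C_mul, coeff_mul, Nat.sum_antidiagonal_eq_sum_range_succ_mk]
  congr 1
  refine sum_congr rfl fun k _ => ?_
  rw [coeff_rescale, coeff_rescale, ← mk_Hml, log_pow_eq_mk_stirlingFirst, coeff_mk, coeff_mk]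
  ring
end

section
/- For all integers n ≥ 0 and m ≥ 0: Σ_{k=m}^{n} C(n,k) s(k,m)/k! = H_n(m)/m!. -/
open Finset

/-! Both sides, as functions `a n m`, satisfy `a n 0 = 1`, `a 0 (m + 1) = 0` and
`(n + 1) a (n + 1) (m + 1) = (n + 1) a n (m + 1) + a n m`, which determines them.

For the left side, `∑ₘ s(k, m) Xᵐ = X (X - 1) ⋯ (X - k + 1)`, so the left side is the
coefficient of `Xᵐ` in `∑ₖ C(n, k) C(X, k)`. By Vandermonde this polynomial is `C(X + n, n)`
(it suffices to check this at natural numbers `X`), and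
`(n + 1) C(X + n + 1, n + 1) = (X + n + 1) C(X + n, n)` gives the recurrence.

For `H_n(m)`, the tuples counted by `H_{n+1}(m+1)` but not by `H_n(m+1)` have sum exactly
`n + 1 = ∑ᵢ kᵢ`; multiplying their weights by `n + 1` and distributing, the `i`-th summand
is the weight of the tuple with its `i`-th entry deleted, and deleting that entry is a bijection
onto the tuples of length `m` with sum `≤ n`. -/

open Polynomial

theorem coeff_descPochhammer_int (k m : ℕ) :
    (descPochhammer ℤ k).coeff m = stirlingFirst k m := by
  induction k generalizing m with
  | zero => cases m <;> simp [stirlingFirst, coeff_one]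
  | succ k ih =>
    cases m with
    | zero => simp [coeff_zero_eq_eval_zero, stirlingFirst]
    | succ m =>
      rw [descPochhammer_succ_right, ← C_eq_natCast, coeff_mul_X_sub_C, ih, ih, stirlingFirst]
      ring

theorem coeff_descPochhammer {R : Type*} [Ring R] (k m : ℕ) :
    (descPochhammer R k).coeff m = stirlingFirst k m := by
  rw [← descPochhammer_map (Int.castRingHom R), coeff_map, coeff_descPochhammer_int,
    eq_intCast]

theorem stirlingFirst_eq_zero_of_lt {k m : ℕ} (h : k < m) : stirlingFirst k m = 0 := by
  rw [← coeff_descPochhammer_int]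
  exact coeff_eq_zero_of_natDegree_lt (by simpa using h)

noncomputable def binomialDescPochhammerSum (n : ℕ) : ℚ[X] :=
  ∑ k ∈ range (n + 1), C ((n.choose k : ℚ) / k.factorial) * descPochhammer ℚ k

theorem coeff_binomialDescPochhammerSum (n m : ℕ) :
    (binomialDescPochhammerSum n).coeff m =
      ∑ k ∈ Icc m n, (n.choose k : ℚ) * (stirlingFirst k m : ℚ) / (k.factorial : ℚ) := by
  have hsub : Icc m n ⊆ range (n + 1) := fun k hk => by simp at hk ⊢; omega
  rw [binomialDescPochhammerSum, finsetSum_coeff, ← sum_subset hsub fun k hkn hk => ?_]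
  · refine sum_congr rfl fun k _ => ?_
    rw [coeff_C_mul, coeff_descPochhammer]
    ring
  · have : k < m := by simp at hk hkn; omega
    simp [coeff_descPochhammer, stirlingFirst_eq_zero_of_lt this]

theorem sum_choose_mul_choose (n x : ℕ) :
    ∑ k ∈ range (n + 1), n.choose k * x.choose k = (n + x).choose n := by
  rw [Nat.add_choose_eq, ← Nat.sum_antidiagonal_swap,
    Nat.sum_antidiagonal_eq_sum_range_succ_mk]
  refine sum_congr rfl fun k hk => ?_
  simp [Nat.choose_symm (mem_range_succ_iff.mp hk)]

theorem eval_binomialDescPochhammerSum (n x : ℕ) :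
    (binomialDescPochhammerSum n).eval (x : ℚ) = (n + x).choose n := by
  simp only [binomialDescPochhammerSum, eval_finsetSum, eval_mul, eval_C,
    descPochhammer_eval_eq_descFactorial, Nat.descFactorial_eq_factorial_mul_choose]
  rw [← sum_choose_mul_choose]
  push_cast
  refine sum_congr rfl fun k _ => ?_
  field_simp

theorem binomialDescPochhammerSum_succ (n : ℕ) :
    C ((n : ℚ) + 1) * binomialDescPochhammerSum (n + 1) =
      (X + C ((n : ℚ) + 1)) * binomialDescPochhammerSum n := by
  refine eq_of_infinite_eval_eq _ _ (Set.infinite_of_injective_forall_mem Nat.cast_injective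
    fun x : ℕ => ?_)
  rw [Set.mem_ofPred_eq]
  simp only [eval_mul, eval_add, eval_X, eval_C]
  rw [eval_binomialDescPochhammerSum, eval_binomialDescPochhammerSum,
    show n + 1 + x = n + x + 1 by ring]
  have h := Nat.add_one_mul_choose_eq (n + x) n
  qify at h
  linear_combination -h

theorem coeff_binomialDescPochhammerSum_succ_succ (n m : ℕ) :
    ((n : ℚ) + 1) * (binomialDescPochhammerSum (n + 1)).coeff (m + 1) =
      ((n : ℚ) + 1) * (binomialDescPochhammerSum n).coeff (m + 1) +
        (binomialDescPochhammerSum n).coeff m := by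
  have h := congrArg (coeff · (m + 1)) (binomialDescPochhammerSum_succ n)
  rw [add_mul, coeff_add, coeff_C_mul, coeff_C_mul, coeff_X_mul] at h
  rw [h, add_comm]

theorem coeff_zero_binomialDescPochhammerSum (n : ℕ) :
    (binomialDescPochhammerSum n).coeff 0 = 1 := by
  rw [coeff_zero_eq_eval_zero, ← Nat.cast_zero, eval_binomialDescPochhammerSum]
  simp

theorem eq_of_succ_mul_recurrence {K : Type*} [Field K] [CharZero K] {f g : ℕ → ℕ → K}
    (hf : ∀ n m : ℕ, ((n : K) + 1) * f (n + 1) (m + 1) = (n + 1) * f n (m + 1) + f n m)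
    (hg : ∀ n m : ℕ, ((n : K) + 1) * g (n + 1) (m + 1) = (n + 1) * g n (m + 1) + g n m)
    (h0 : ∀ n, f n 0 = g n 0) (hz : ∀ m, f 0 (m + 1) = g 0 (m + 1)) : f = g := by
  funext n
  induction n with
  | zero => funext m; cases m <;> simp [h0, hz]
  | succ n ih =>
    funext m
    cases m with
    | zero => exact h0 _
    | succ m =>
      exact mul_left_cancel₀ (Nat.cast_add_one_ne_zero n) ((hf n m).trans (by rw [hg, ih]))

def posTuplesSumLe (m n : ℕ) : Finset (Fin m → ℕ) :=
  (Fintype.piFinset fun _ => Icc 1 n).filter fun k => ∑ i, k i ≤ n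

def posTuplesSumEq (m n : ℕ) : Finset (Fin m → ℕ) :=
  (Fintype.piFinset fun _ => Icc 1 n).filter fun k => ∑ i, k i = n

theorem mem_posTuplesSumLe {m n : ℕ} {k : Fin m → ℕ} :
    k ∈ posTuplesSumLe m n ↔ (∀ i, 0 < k i) ∧ ∑ i, k i ≤ n := by
  simp only [posTuplesSumLe, mem_filter, Fintype.mem_piFinset, mem_Icc]
  exact ⟨fun h => ⟨fun i => (h.1 i).1, h.2⟩, fun h =>
    ⟨fun i => ⟨h.1 i, (single_le_sum (fun j _ => (k j).zero_le) (mem_univ i)).trans h.2⟩,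
      h.2⟩⟩

theorem mem_posTuplesSumEq {m n : ℕ} {k : Fin m → ℕ} :
    k ∈ posTuplesSumEq m n ↔ (∀ i, 0 < k i) ∧ ∑ i, k i = n := by
  simp only [posTuplesSumEq, mem_filter, Fintype.mem_piFinset, mem_Icc]
  exact ⟨fun h => ⟨fun i => (h.1 i).1, h.2⟩, fun h =>
    ⟨fun i => ⟨h.1 i, h.2 ▸ single_le_sum (fun j _ => (k j).zero_le) (mem_univ i)⟩,
      h.2⟩⟩

theorem posTuplesSumLe_succ (m n : ℕ) :
    posTuplesSumLe m (n + 1) = posTuplesSumLe m n ∪ posTuplesSumEq m (n + 1) := by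
  ext k
  simp only [mem_union, mem_posTuplesSumLe, mem_posTuplesSumEq, ← and_or_left]
  exact and_congr_right fun _ => by omega

theorem disjoint_posTuplesSumLe_posTuplesSumEq (m n : ℕ) :
    Disjoint (posTuplesSumLe m n) (posTuplesSumEq m (n + 1)) :=
  disjoint_left.2 fun k hle heq => by
    rw [mem_posTuplesSumLe] at hle
    rw [mem_posTuplesSumEq] at heq
    omega

theorem sum_posTuplesSumEq_removeNth {M : Type*} [AddCommMonoid M] {m n : ℕ}
    (f : (Fin m → ℕ) → M) (i : Fin (m + 1)) :
    ∑ k ∈ posTuplesSumEq (m + 1) (n + 1), f (i.removeNth k) =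
      ∑ k ∈ posTuplesSumLe m n, f k := by
  have hsum (k : Fin (m + 1) → ℕ) : ∑ j, k j = k i + ∑ j, i.removeNth k j :=
    Fin.sum_univ_succAbove k i
  refine sum_nbij' i.removeNth (fun g => i.insertNth (n + 1 - ∑ j, g j) g)
    (fun k hk => ?_) (fun g hg => ?_) (fun k hk => ?_) (fun g _ => Fin.removeNth_insertNth ..)
    (fun _ _ => rfl)
  · rw [mem_posTuplesSumEq] at hk
    rw [mem_posTuplesSumLe]
    exact ⟨fun j => hk.1 _, by have := hsum k; have := hk.1 i; omega⟩
  · rw [mem_posTuplesSumLe] at hg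
    rw [mem_posTuplesSumEq, Fin.forall_iff_succAbove i, hsum]
    simp only [Fin.insertNth_apply_same, Fin.insertNth_apply_succAbove, Fin.removeNth_insertNth]
    exact ⟨⟨by omega, hg.1⟩, by omega⟩
  · rw [mem_posTuplesSumEq] at hk
    rw [Fin.insertNth_eq_iff]
    exact ⟨by have := hsum k; omega, rfl⟩

theorem sum_mul_prod_inv {K : Type*} [Field K] {m : ℕ} (x : Fin (m + 1) → K)
    (hx : ∀ i, x i ≠ 0) :
    (∑ i, x i) * ∏ i, (x i)⁻¹ = ∑ i, ∏ j, (Fin.removeNth i x j)⁻¹ := by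
  rw [sum_mul]
  refine sum_congr rfl fun i _ => ?_
  rw [Fin.prod_univ_succAbove _ i, ← mul_assoc, mul_inv_cancel₀ (hx i), one_mul]
  rfl

theorem Hml_eq_sum (n m : ℕ) :
    Hml n m = ∑ k ∈ posTuplesSumLe m n, ∏ i, ((k i : ℚ))⁻¹ := by
  simp only [Hml, posTuplesSumLe, one_div]

theorem succ_mul_sum_posTuplesSumEq (n m : ℕ) :
    ((n : ℚ) + 1) * ∑ k ∈ posTuplesSumEq (m + 1) (n + 1), ∏ i, ((k i : ℚ))⁻¹ =
      (m + 1) * Hml n m :=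
  calc ((n : ℚ) + 1) * ∑ k ∈ posTuplesSumEq (m + 1) (n + 1), ∏ i, ((k i : ℚ))⁻¹
      = ∑ k ∈ posTuplesSumEq (m + 1) (n + 1),
          ∑ i, ∏ j, ((Fin.removeNth i k j : ℚ))⁻¹ := by
        rw [mul_sum]
        refine sum_congr rfl fun k hk => ?_
        rw [mem_posTuplesSumEq] at hk
        have hw := sum_mul_prod_inv (fun i => (k i : ℚ)) fun i => by have := hk.1 i; positivity
        rw [← Nat.cast_sum, hk.2] at hw
        exact_mod_cast hw
    _ = (m + 1) * Hml n m := by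
        rw [sum_comm, sum_congr rfl fun i _ =>
          sum_posTuplesSumEq_removeNth (fun k => ∏ j, ((k j : ℚ))⁻¹) i, sum_const,
          card_univ, Fintype.card_fin, nsmul_eq_mul, Hml_eq_sum]
        push_cast
        ring

theorem Hml_succ_succ (n m : ℕ) :
    ((n : ℚ) + 1) * Hml (n + 1) (m + 1) = (n + 1) * Hml n (m + 1) + (m + 1) * Hml n m := by
  rw [Hml_eq_sum (n + 1), posTuplesSumLe_succ,
    sum_union (disjoint_posTuplesSumLe_posTuplesSumEq (m + 1) n), mul_add,
    succ_mul_sum_posTuplesSumEq, Hml_eq_sum n (m + 1)]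

theorem stmt_3 (n m : ℕ) :
    ∑ k ∈ Finset.Icc m n, (n.choose k : ℚ) * (stirlingFirst k m : ℚ) / (k.factorial : ℚ) =
      Hml n m / (m.factorial : ℚ) := by
  rw [← coeff_binomialDescPochhammerSum]
  suffices h : (fun n m => (binomialDescPochhammerSum n).coeff m) =
      fun n m => Hml n m / (m.factorial : ℚ) from congrFun (congrFun h n) m
  refine eq_of_succ_mul_recurrence coeff_binomialDescPochhammerSum_succ_succ (fun n m => ?_)
    (fun n => by simp [coeff_zero_binomialDescPochhammerSum, Hml])
    (fun m => by simp [binomialDescPochhammerSum, Hml, coeff_one])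
  rw [Nat.factorial_succ, Nat.cast_mul, ← mul_div_assoc, Hml_succ_succ]
  field_simp
  push_cast
  ring
end

section
/- For all integers n ≥ 0 and m ≥ 0: Σ_{k=0}^{n} C(n,k) H_k(m) = Σ_{j=0}^{m} C(m,j) Σ_{k=0}^{n} H_k(j) (−1)^{n−k} 2^k · ((m−j)!/(n−k)!) · s(n−k, m−j). -/
open Finset

/-!
Both sides are coefficients of power series over `ℚ`. With `L = -log(1 - X)` one has
`∑ₙ H_n(m) Xⁿ = L^m / (1 - X)`, and the binomial transform `aₙ ↦ ∑ₖ C(n,k) aₖ` is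
`A(X) ↦ A(X / (1 - X)) / (1 - X)`. Since `L(X / (1 - X)) = L(2X) - L` (both have derivative
`1 / ((1 - X)(1 - 2X))`) and `1 / (1 - X)` becomes `(1 - X) / (1 - 2X)`, the left side is the `n`-th coefficient of `(L(2X) - L)^m / (1 - 2X)`.
Expanding the power binomially gives the right side, because
`(-L)^q = ∑ₙ (-1)ⁿ q! s(n,q) Xⁿ / n!` and `L(2X)^j / (1 - 2X) = ∑ₖ 2ᵏ H_k(j) Xᵏ`.
-/

open PowerSeries

local notation "geom" => (PowerSeries.mk 1 : ℚ⟦X⟧)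

/-- `-log(1 - X)`; the junk value `1 / 0 = 0` supplies the vanishing constant term. -/
noncomputable def logSeries : ℚ⟦X⟧ := PowerSeries.mk fun n => 1 / (n : ℚ)

lemma derivative_logSeries : d⁄dX ℚ logSeries = geom := by
  ext n
  simp only [logSeries, one_div, coeff_derivative, coeff_mk, Nat.cast_add, Nat.cast_one,
    Pi.one_apply]
  field_simp

section Hml

lemma Hml_eq_sum_filter_piFinset {N n : ℕ} (m : ℕ) (h : N ≤ n) :
    Hml N m = ∑ k ∈ (Fintype.piFinset fun _ : Fin m => Icc 1 n).filter (fun k => ∑ i, k i ≤ N),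
      ∏ i, (1 : ℚ) / (k i : ℚ) := by
  refine sum_congr ?_ fun _ _ => rfl
  ext k
  simp only [mem_filter, Fintype.mem_piFinset, mem_Icc]
  refine ⟨fun ⟨hk, hsum⟩ => ⟨fun i => ⟨(hk i).1, (hk i).2.trans h⟩, hsum⟩,
    fun ⟨hk, hsum⟩ => ⟨fun i => ⟨(hk i).1, ?_⟩, hsum⟩⟩
  exact (single_le_sum (fun j _ => Nat.zero_le (k j)) (mem_univ i)).trans hsum

lemma Hml_succ_eq_sum_Icc (n m : ℕ) :
    Hml n (m + 1) = ∑ t ∈ Icc 1 n, 1 / (t : ℚ) * Hml (n - t) m := by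
  have hbox (t : ℕ) (ht : t ∈ Icc 1 n) : 1 / (t : ℚ) * Hml (n - t) m =
      ∑ k ∈ (Fintype.piFinset fun _ : Fin m => Icc 1 n).filter (fun k => t + ∑ i, k i ≤ n),
        1 / (t : ℚ) * ∏ i, (1 : ℚ) / (k i : ℚ) := by
    rw [Hml_eq_sum_filter_piFinset m (Nat.sub_le n t), mul_sum]
    refine sum_congr (filter_congr fun k _ => ?_) fun _ _ => rfl
    rw [mem_Icc] at ht
    omega
  rw [sum_congr rfl hbox, sum_sigma']
  refine sum_nbij' (fun k => ⟨k 0, Fin.tail k⟩) (fun p => Fin.cons p.1 p.2) ?_ ?_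
    (fun k _ => Fin.cons_self_tail k) (fun p _ => by simp) ?_
  · intro k hk
    simp only [mem_filter, Fintype.mem_piFinset, Fin.sum_univ_succ] at hk
    exact mem_sigma.mpr
      ⟨hk.1 0, mem_filter.mpr ⟨Fintype.mem_piFinset.mpr fun i => hk.1 i.succ, hk.2⟩⟩
  · intro p hp
    simp only [mem_sigma, mem_filter, Fintype.mem_piFinset] at hp
    simp only [mem_filter, Fintype.mem_piFinset, Fin.sum_univ_succ, Fin.forall_fin_succ,
      Fin.cons_zero, Fin.cons_succ]
    exact ⟨⟨hp.1, hp.2.1⟩, hp.2.2⟩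
  · intro k _
    simp [Fin.prod_univ_succ, Fin.tail, mul_comm]

lemma Hml_succ (n m : ℕ) :
    Hml n (m + 1) = ∑ t ∈ range (n + 1), 1 / (t : ℚ) * Hml (n - t) m := by
  rw [Hml_succ_eq_sum_Icc, range_eq_Ico, sum_eq_sum_Ico_succ_bot (Nat.succ_pos n), zero_add,
    Nat.succ_eq_add_one, Ico_add_one_right_eq_Icc]
  simp

lemma Hml_eq_coeff (n m : ℕ) : Hml n m = coeff n (geom * logSeries ^ m) := by
  induction m generalizing n with
  | zero => simp [Hml]
  | succ m ih =>
    rw [pow_succ', mul_left_comm, coeff_mul, Nat.sum_antidiagonal_eq_sum_range_succ_mk, Hml_succ]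
    simp [logSeries, ih]

end Hml

section Stirling

lemma coeff_X_mul_derivative (f : ℚ⟦X⟧) (n : ℕ) : coeff n (X * d⁄dX ℚ f) = n * coeff n f := by
  cases n with
  | zero => simp
  | succ n => rw [coeff_succ_X_mul, coeff_derivative, mul_comm]; push_cast; ring

lemma one_sub_X_mul_derivative_neg_logSeries_pow (q : ℕ) :
    (1 - X) * d⁄dX ℚ ((-logSeries) ^ (q + 1)) =
      -(((q + 1 : ℕ) : ℚ⟦X⟧) * (-logSeries) ^ q) := by
  rw [derivative_pow, map_neg, derivative_logSeries, Nat.add_sub_cancel]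
  linear_combination -(((q + 1 : ℕ) : ℚ⟦X⟧) * (-logSeries) ^ q) * mk_one_mul_one_sub_eq_one ℚ

lemma coeff_succ_neg_logSeries_pow_succ (q n : ℕ) :
    (n + 1 : ℚ) * coeff (n + 1) ((-logSeries) ^ (q + 1)) =
      n * coeff n ((-logSeries) ^ (q + 1)) - (q + 1) * coeff n ((-logSeries) ^ q) := by
  have h := congrArg (coeff n) (one_sub_X_mul_derivative_neg_logSeries_pow q)
  rw [sub_mul, one_mul, map_sub, map_neg, ← map_natCast C, coeff_C_mul, coeff_X_mul_derivative,
    coeff_derivative] at h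
  push_cast at h
  linear_combination h

lemma coeff_neg_logSeries_pow (q n : ℕ) :
    coeff n ((-logSeries) ^ q) = (-1) ^ n * q.factorial * stirlingFirst n q / n.factorial := by
  induction q generalizing n with
  | zero => cases n <;> simp [stirlingFirst, coeff_one]
  | succ q ihq =>
    induction n with
    | zero =>
      rw [coeff_zero_eq_constantCoeff_apply, map_pow]
      simp [stirlingFirst, logSeries]
    | succ n ihn =>
      have hs : (stirlingFirst (n + 1) (q + 1) : ℚ) =
          stirlingFirst n q - n * stirlingFirst n (q + 1) := by
        simp [stirlingFirst]
      apply mul_left_cancel₀ (show (n + 1 : ℚ) ≠ 0 by positivity)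
      rw [coeff_succ_neg_logSeries_pow_succ, ihn, ihq, hs, Nat.factorial_succ, Nat.factorial_succ]
      push_cast
      field_simp
      ring

end Stirling

section BinomialTransform

lemma coeff_mk_one_mul (f : ℚ⟦X⟧) (n : ℕ) :
    coeff n (geom * f) = ∑ b ∈ range (n + 1), coeff b f := by
  rw [mul_comm, coeff_mul, Nat.sum_antidiagonal_eq_sum_range_succ_mk]
  simp

noncomputable def xDivOneSubX : ℚ⟦X⟧ := X * geom

lemma hasSubst_xDivOneSubX : HasSubst xDivOneSubX :=
  HasSubst.of_constantCoeff_zero' (by simp [xDivOneSubX])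

lemma coeff_xDivOneSubX_pow_of_lt {b d : ℕ} (h : b < d) : coeff b (xDivOneSubX ^ d) = 0 := by
  rw [xDivOneSubX, mul_pow, coeff_X_pow_mul', if_neg (not_le.mpr h)]

lemma coeff_mk_one_mul_xDivOneSubX_pow (n d : ℕ) :
    coeff n (geom * xDivOneSubX ^ d) = n.choose d := by
  rw [xDivOneSubX, mul_pow, mul_left_comm, ← pow_succ', mk_one_pow_eq_mk_choose_add,
    coeff_X_pow_mul']
  split_ifs with h
  · simp [Nat.add_sub_cancel' h]
  · simp [Nat.choose_eq_zero_of_lt (not_le.mp h)]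

lemma coeff_mk_one_mul_subst_xDivOneSubX (f : ℚ⟦X⟧) (n : ℕ) :
    coeff n (geom * f.subst xDivOneSubX) = ∑ k ∈ range (n + 1), (n.choose k : ℚ) * coeff k f := by
  have hcoeff (b : ℕ) (hb : b ∈ range (n + 1)) : coeff b (f.subst xDivOneSubX) =
      ∑ d ∈ range (n + 1), coeff d f * coeff b (xDivOneSubX ^ d) := by
    rw [coeff_subst' hasSubst_xDivOneSubX]
    refine finsum_eq_sum_of_support_subset _ fun d hd => mem_range.mpr ?_
    by_contra! h
    exact hd (by simp [coeff_xDivOneSubX_pow_of_lt (show b < d by grind)])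
  rw [coeff_mk_one_mul, sum_congr rfl hcoeff, sum_comm]
  refine sum_congr rfl fun d _ => ?_
  rw [← mul_sum, ← coeff_mk_one_mul, coeff_mk_one_mul_xDivOneSubX_pow, mul_comm]

lemma mk_one_mul_subst_mk_one : geom * PowerSeries.subst xDivOneSubX geom = rescale 2 geom := by
  ext n
  rw [coeff_mk_one_mul_subst_xDivOneSubX]
  simp [← Nat.cast_sum, Nat.sum_range_choose]

lemma rescale_two_mk_one_mul_one_sub_two_X : rescale 2 geom * (1 - 2 * X) = 1 := by
  have := congrArg (rescale (2 : ℚ)) (mk_one_mul_one_sub_eq_one ℚ)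
  rwa [map_mul, map_sub, map_one, rescale_X, map_ofNat] at this

lemma derivative_mk_one : d⁄dX ℚ geom = geom ^ 2 := by
  ext n
  rw [coeff_derivative, ← zero_add 1, mk_one_pow_eq_mk_choose_add]
  simp [add_comm]

lemma subst_xDivOneSubX_logSeries :
    logSeries.subst xDivOneSubX = rescale 2 logSeries - logSeries := by
  have hgeom : geom * (1 - X) = 1 := mk_one_mul_one_sub_eq_one ℚ
  have hsubst : PowerSeries.subst xDivOneSubX geom = (1 - X) * rescale 2 geom := by
    rw [← mk_one_mul_subst_mk_one]
    linear_combination -(PowerSeries.subst xDivOneSubX geom) * hgeom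
  apply derivative.ext
  · have hinner : d⁄dX ℚ xDivOneSubX = geom ^ 2 := by
      rw [xDivOneSubX, Derivation.leibniz, derivative_mk_one, derivative_X]
      simp only [smul_eq_mul]
      linear_combination -geom * hgeom
    have hrescale : d⁄dX ℚ (rescale 2 logSeries) = 2 * rescale 2 geom := by
      ext n
      rw [coeff_derivative, ← map_ofNat C 2, coeff_C_mul]
      simp only [logSeries, one_div, coeff_rescale, coeff_mk, Nat.cast_add, Nat.cast_one,
        Pi.one_apply, mul_one]
      field_simp
      ring
    rw [derivative_subst hasSubst_xDivOneSubX, derivative_logSeries, hsubst, hinner, map_sub,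
      hrescale, derivative_logSeries]
    linear_combination (rescale 2 geom * geom + 2 * rescale 2 geom) * hgeom -
      geom * rescale_two_mk_one_mul_one_sub_two_X
  · have h0 := coeff_mk_one_mul_subst_xDivOneSubX logSeries 0
    simp only [coeff_mk_one_mul, zero_add, range_one, sum_singleton, Nat.choose_self,
      Nat.cast_one, one_mul] at h0
    rw [← coeff_zero_eq_constantCoeff_apply, ← coeff_zero_eq_constantCoeff_apply, h0, map_sub,
      coeff_rescale]
    simp [logSeries]

end BinomialTransform

lemma sum_choose_mul_Hml (n m : ℕ) :
    ∑ k ∈ range (n + 1), (n.choose k : ℚ) * Hml k m =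
      coeff n (rescale 2 geom * (rescale 2 logSeries - logSeries) ^ m) := by
  simp_rw [Hml_eq_coeff, ← coeff_mk_one_mul_subst_xDivOneSubX,
    subst_mul hasSubst_xDivOneSubX, subst_pow hasSubst_xDivOneSubX, ← mul_assoc,
    mk_one_mul_subst_mk_one, subst_xDivOneSubX_logSeries]

lemma coeff_rescale_two_mul_neg_logSeries_pow (n j q : ℕ) :
    coeff n (rescale 2 (geom * logSeries ^ j) * (-logSeries) ^ q) =
      ∑ k ∈ range (n + 1), Hml k j * (-1) ^ (n - k) * 2 ^ k *
        ((q.factorial : ℚ) / ((n - k).factorial : ℚ)) * (stirlingFirst (n - k) q : ℚ) := by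
  rw [coeff_mul, Nat.sum_antidiagonal_eq_sum_range_succ_mk]
  refine sum_congr rfl fun k _ => ?_
  rw [coeff_rescale, ← Hml_eq_coeff, coeff_neg_logSeries_pow]
  ring

theorem stmt_4 (n m : ℕ) :
    ∑ k ∈ Finset.range (n + 1), (n.choose k : ℚ) * Hml k m =
      ∑ j ∈ Finset.range (m + 1), (m.choose j : ℚ) *
        ∑ k ∈ Finset.range (n + 1),
          Hml k j * (-1) ^ (n - k) * 2 ^ k *
            (((m - j).factorial : ℚ) / ((n - k).factorial : ℚ)) *
            (stirlingFirst (n - k) (m - j) : ℚ) := by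
  rw [sum_choose_mul_Hml, sub_eq_add_neg, add_pow, mul_sum, map_sum]
  refine sum_congr rfl fun j _ => ?_
  rw [← coeff_rescale_two_mul_neg_logSeries_pow, ← map_natCast C (m.choose j), ← coeff_C_mul]
  congr 1
  rw [map_mul, map_pow]
  ring
end

section
/- For all complex numbers a, b and all integers n ≥ 0: Σ_{k=0}^{n} C(n,k) a^k b^{n−k} H_k(2) = H_n(2)·(a+b)^n + 2 Σ_{k=1}^{n} (a+b)^{n−k} b^k (H_{k−1} − H_{n−k})/k. -/
open Finset

/-!
Write `S_n(f) = ∑_k C(n,k) a^k b^(n-k) f(k)`. Pascal's rule gives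
`S_(n+1)(f) = (a+b) S_n(f) + a S_n(Δf)`, and the absorption identity
`C(n,k)/(k+1) = C(n+1,k+1)/(n+1)` turns `a S_n(k ↦ f(k+1)/(k+1))` into `S_(n+1)(f)/(n+1)`.
Since `H_(k+1)(2) - H_k(2) = 2 H_k/(k+1)`, the step for `H(2)` is governed by the transform of
`H_(k-1) = H_k - 1/k`, and the transforms of `H_k` and `1/k` follow from the same two recurrences.
The right-hand side satisfies the same recurrence by the partial fractions
`(n+1)/(k(n+1-k)) = 1/k + 1/(n+1-k)` and the reflection `k ↦ n+1-k`.
-/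

section BinomialSum

variable {R : Type*}

def binomSum [CommSemiring R] (a b : R) (f : ℕ → R) (n : ℕ) : R :=
  ∑ k ∈ range (n + 1), (n.choose k : R) * a ^ k * b ^ (n - k) * f k

theorem binomSum_one [CommSemiring R] (a b : R) (n : ℕ) :
    binomSum a b (fun _ => 1) n = (a + b) ^ n := by
  rw [binomSum, add_pow]
  exact sum_congr rfl fun k _ => by ring

theorem binomSum_succ [CommSemiring R] (a b : R) (f : ℕ → R) (n : ℕ) :
    binomSum a b f (n + 1) = b * binomSum a b f n + a * binomSum a b (fun k => f (k + 1)) n := by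
  have hpascal := sum_choose_succ_mul (fun i j => a ^ i * b ^ j * f i) n
  simp only [← mul_assoc] at hpascal
  rw [binomSum, hpascal, binomSum, binomSum, mul_sum, mul_sum]
  congr 1 <;> refine sum_congr rfl fun k hk => ?_
  · rw [Nat.sub_add_comm (mem_range_succ_iff.mp hk), pow_succ]
    ring
  · ring

theorem binomSum_sub [CommRing R] (a b : R) (f g : ℕ → R) (n : ℕ) :
    binomSum a b (fun k => f k - g k) n = binomSum a b f n - binomSum a b g n := by
  simp only [binomSum, mul_sub, sum_sub_distrib]

theorem binomSum_succ_eq_add_mul_fwdDiff [CommRing R] (a b : R) (f : ℕ → R) (n : ℕ) :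
    binomSum a b f (n + 1) =
      (a + b) * binomSum a b f n + a * binomSum a b (fun k => f (k + 1) - f k) n := by
  rw [binomSum_succ, binomSum_sub]
  ring

theorem binomSum_const_mul [CommSemiring R] (a b r : R) (f : ℕ → R) (n : ℕ) :
    binomSum a b (fun k => r * f k) n = r * binomSum a b f n := by
  simp only [binomSum, mul_sum]
  exact sum_congr rfl fun k _ => by ring

theorem mul_binomSum_div_succ [Field R] [CharZero R] (a b : R) (f : ℕ → R) (n : ℕ) :
    a * binomSum a b (fun k => f (k + 1) / (k + 1)) n =
      (binomSum a b f (n + 1) - b ^ (n + 1) * f 0) / (n + 1) := by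
  rw [eq_div_iff (Nat.cast_add_one_ne_zero n), binomSum, binomSum, sum_range_succ' _ (n + 1),
    mul_sum, sum_mul]
  simp only [Nat.choose_zero_right, Nat.cast_one, pow_zero, Nat.sub_zero, one_mul,
    add_sub_cancel_right]
  refine sum_congr rfl fun k _ => ?_
  have hchoose : ((n + 1).choose (k + 1) : R) * (k + 1) = (n + 1) * n.choose k := by
    exact_mod_cast (Nat.add_one_mul_choose_eq n k).symm
  rw [Nat.add_sub_add_right]
  field_simp
  linear_combination (-(a ^ (k + 1) * b ^ (n - k) * f (k + 1))) * hchoose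

theorem mul_binomSum_inv_succ [Field R] [CharZero R] (a b : R) (n : ℕ) :
    a * binomSum a b (fun k => ((k : R) + 1)⁻¹) n =
      ((a + b) ^ (n + 1) - b ^ (n + 1)) / (n + 1) := by
  simpa [binomSum_one] using mul_binomSum_div_succ a b (fun _ => 1) n

end BinomialSum

theorem sum_Icc_one_reflect {M : Type*} [AddCommMonoid M] (f : ℕ → M) (n : ℕ) :
    ∑ k ∈ Icc 1 n, f (n + 1 - k) = ∑ k ∈ Icc 1 n, f k := by
  refine sum_nbij' (fun k => n + 1 - k) (fun k => n + 1 - k) ?_ ?_ ?_ ?_ ?_ <;>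
    intro k hk <;> simp only [mem_Icc] at hk ⊢ <;> omega

theorem sum_Icc_pow_mul_succ {R : Type*} [CommSemiring R] (x : R) (w : ℕ → R) (n : ℕ) :
    ∑ k ∈ Icc 1 (n + 1), x ^ (n + 1 - k) * w k =
      x * ∑ k ∈ Icc 1 n, x ^ (n - k) * w k + w (n + 1) := by
  rw [sum_Icc_succ_top (by omega), mul_sum, Nat.sub_self, pow_zero, one_mul]
  congr 1
  refine sum_congr rfl fun k hk => ?_
  rw [Nat.sub_add_comm (mem_Icc.mp hk).2, pow_succ]
  ring

theorem sum_Icc_div_mul_succ_sub {K : Type*} [Field K] [CharZero K] (g : ℕ → K) (n : ℕ) :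
    ∑ k ∈ Icc 1 n, g k / (k * (n + 1 - k : ℕ)) =
      (∑ k ∈ Icc 1 n, (g k + g (n + 1 - k)) / k) / (n + 1) := by
  have hreflect : ∑ k ∈ Icc 1 n, g (n + 1 - k) / k = ∑ k ∈ Icc 1 n, g k / (n + 1 - k : ℕ) := by
    rw [← sum_Icc_one_reflect]
    refine sum_congr rfl fun k hk => ?_
    rw [Nat.sub_sub_self (Nat.le_succ_of_le (mem_Icc.mp hk).2)]
  rw [eq_div_iff (Nat.cast_add_one_ne_zero n), sum_mul]
  simp only [add_div, sum_add_distrib]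
  rw [hreflect, ← sum_add_distrib]
  refine sum_congr rfl fun k hk => ?_
  obtain ⟨hk1, hkn⟩ := mem_Icc.mp hk
  have hk0 : (k : K) ≠ 0 := Nat.cast_ne_zero.mpr (by omega)
  have hnk : ((n + 1 - k : ℕ) : K) ≠ 0 := Nat.cast_ne_zero.mpr (by omega)
  rw [Nat.cast_sub (by omega)] at hnk ⊢
  push_cast at hnk ⊢
  field_simp
  ring

theorem harm_eq_harmonic : harm = harmonic := by
  funext n
  simp only [harm, harmonic_eq_sum_Icc, one_div]

theorem harmonic_add_one_sub {n k : ℕ} (h : k ≤ n) :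
    harmonic (n + 1 - k) = harmonic (n - k) + ((n + 1 - k : ℕ) : ℚ)⁻¹ := by
  rw [Nat.sub_add_comm h, harmonic_succ]

section Harmonic

variable {K : Type*} [Field K] [CharZero K]

theorem cast_harmonic (n : ℕ) : (harmonic n : K) = ∑ k ∈ Icc 1 n, (k : K)⁻¹ := by
  simp [harmonic_eq_sum_Icc]

theorem cast_harmonic_succ (n : ℕ) : (harmonic (n + 1) : K) = harmonic n + ((n : K) + 1)⁻¹ := by
  simp [harmonic_succ]

-- At `n = 0` both sides vanish, since `0 - 1 = 0` in `ℕ` and `0⁻¹ = 0`.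
theorem cast_harmonic_pred (n : ℕ) : (harmonic (n - 1) : K) = harmonic n - (n : K)⁻¹ := by
  cases n <;> simp

end Harmonic

section HarmonicBinomialSums

variable {K : Type*} [Field K] [CharZero K] (a b : K)

theorem binomSum_harmonic (n : ℕ) :
    binomSum a b (fun k => (harmonic k : K)) n =
      (a + b) ^ n * harmonic n - ∑ k ∈ Icc 1 n, (a + b) ^ (n - k) * (b ^ k / k) := by
  induction n with
  | zero => simp [binomSum]
  | succ n ih =>
    simp only [binomSum_succ_eq_add_mul_fwdDiff, cast_harmonic_succ, add_sub_cancel_left]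
    rw [mul_binomSum_inv_succ, ih, sum_Icc_pow_mul_succ]
    push_cast
    ring

-- The `k = 0` term of the left-hand side is `0⁻¹ = 0`.
theorem binomSum_inv (n : ℕ) :
    binomSum a b (fun k => (k : K)⁻¹) n =
      ∑ k ∈ Icc 1 n, b ^ (n - k) * (((a + b) ^ k - b ^ k) / k) := by
  induction n with
  | zero => simp [binomSum]
  | succ n ih =>
    simp only [binomSum_succ, Nat.cast_add, Nat.cast_one]
    rw [mul_binomSum_inv_succ, ih, sum_Icc_pow_mul_succ]
    push_cast
    ring

theorem binomSum_harmonic_pred (n : ℕ) :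
    binomSum a b (fun k => (harmonic (k - 1) : K)) (n + 1) =
      harmonic n * ((a + b) ^ (n + 1) + b ^ (n + 1)) -
        ∑ k ∈ Icc 1 n, ((a + b) ^ (n + 1 - k) * b ^ k + (a + b) ^ k * b ^ (n + 1 - k)) / k := by
  have hsplit : ∀ k ∈ Icc 1 n, b ^ (n + 1 - k) * (((a + b) ^ k - b ^ k) / k) =
      (a + b) ^ k * b ^ (n + 1 - k) / k - b ^ (n + 1) * (k : K)⁻¹ := by
    intro k hk
    rw [← pow_sub_mul_pow b (Nat.le_succ_of_le (mem_Icc.mp hk).2)]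
    ring
  simp only [cast_harmonic_pred]
  rw [binomSum_sub, binomSum_harmonic, binomSum_inv, sum_Icc_succ_top (by omega),
    sum_Icc_succ_top (by omega), sum_congr rfl hsplit, sum_sub_distrib, ← mul_sum, ← cast_harmonic,
    cast_harmonic_succ]
  simp only [add_div, sum_add_distrib, mul_div_assoc, Nat.sub_self, pow_zero]
  push_cast
  ring

end HarmonicBinomialSums

theorem Hml_two_eq_sum (n : ℕ) : Hml n 2 = ∑ k ∈ Icc 1 n, harmonic (n - k) / k := by
  calc Hml n 2 = ∑ p ∈ (Icc 1 n).sigma (fun i => Icc 1 (n - i)), (p.1 : ℚ)⁻¹ * (p.2 : ℚ)⁻¹ := by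
        refine sum_nbij' (fun k => ⟨k 0, k 1⟩) (fun p => ![p.1, p.2]) ?_ ?_ ?_ ?_ ?_
        · intro k hk
          simp only [mem_filter, Fintype.mem_piFinset, mem_Icc, Fin.sum_univ_two,
            Fin.forall_fin_two, mem_sigma] at hk ⊢
          omega
        · intro p hp
          simp only [mem_filter, Fintype.mem_piFinset, mem_Icc, Fin.sum_univ_two,
            Fin.forall_fin_two, mem_sigma, Matrix.cons_val_zero, Matrix.cons_val_one] at hp ⊢
          omega
        · intro k _; ext i; fin_cases i <;> rfl
        · intro p _; rfl
        · intro k _; simp only [Fin.prod_univ_two, one_div]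
    _ = ∑ i ∈ Icc 1 n, ∑ j ∈ Icc 1 (n - i), (i : ℚ)⁻¹ * (j : ℚ)⁻¹ := sum_sigma _ _ _
    _ = ∑ k ∈ Icc 1 n, harmonic (n - k) / k := by
        refine sum_congr rfl fun k _ => ?_
        rw [harmonic_eq_sum_Icc, div_eq_inv_mul, mul_sum]

theorem Hml_two_succ (n : ℕ) : Hml (n + 1) 2 = Hml n 2 + 2 * harmonic n / (n + 1) := by
  have hterm : ∀ k ∈ Icc 1 n,
      harmonic (n + 1 - k) / k = harmonic (n - k) / k + 1 / (k * (n + 1 - k : ℕ)) := by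
    intro k hk
    rw [harmonic_add_one_sub (mem_Icc.mp hk).2]
    ring
  have hpartial := sum_Icc_div_mul_succ_sub (fun _ => (1 : ℚ)) n
  rw [Hml_two_eq_sum, Hml_two_eq_sum, sum_Icc_succ_top (by omega), Nat.sub_self, harmonic_zero,
    zero_div, add_zero, sum_congr rfl hterm, sum_add_distrib, hpartial, harmonic_eq_sum_Icc,
    mul_sum]
  simp only [one_add_one_eq_two, div_eq_mul_inv]

section MainIdentity

variable {K : Type*} [Field K] [CharZero K]

theorem cast_Hml_two_succ (n : ℕ) :
    (Hml (n + 1) 2 : K) = Hml n 2 + 2 * harmonic n / (n + 1) := by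
  rw [Hml_two_succ]
  push_cast
  ring

theorem sum_Icc_harmonic_sub_succ (c b : K) (n : ℕ) :
    ∑ k ∈ Icc 1 (n + 1),
        c ^ (n + 1 - k) * b ^ k * (((harmonic (k - 1) : K) - harmonic (n + 1 - k)) / k) =
      c * ∑ k ∈ Icc 1 n, c ^ (n - k) * b ^ k * (((harmonic (k - 1) : K) - harmonic (n - k)) / k) +
        (harmonic n * b ^ (n + 1) -
          ∑ k ∈ Icc 1 n, (c ^ (n + 1 - k) * b ^ k + c ^ k * b ^ (n + 1 - k)) / k) / (n + 1) := by
  have hterm : ∀ k ∈ Icc 1 n,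
      c ^ (n + 1 - k) * b ^ k * (((harmonic (k - 1) : K) - harmonic (n + 1 - k)) / k) =
        c * (c ^ (n - k) * b ^ k * (((harmonic (k - 1) : K) - harmonic (n - k)) / k)) -
          c ^ (n + 1 - k) * b ^ k / (k * (n + 1 - k : ℕ)) := by
    intro k hk
    rw [harmonic_add_one_sub (mem_Icc.mp hk).2, Nat.sub_add_comm (mem_Icc.mp hk).2, pow_succ]
    push_cast
    simp only [div_eq_mul_inv, mul_inv]
    ring
  have hreflect : ∑ k ∈ Icc 1 n, (c ^ (n + 1 - k) * b ^ k + c ^ (n + 1 - (n + 1 - k)) *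
        b ^ (n + 1 - k)) / k =
      ∑ k ∈ Icc 1 n, (c ^ (n + 1 - k) * b ^ k + c ^ k * b ^ (n + 1 - k)) / k :=
    sum_congr rfl fun k hk => by rw [Nat.sub_sub_self (Nat.le_succ_of_le (mem_Icc.mp hk).2)]
  rw [sum_Icc_succ_top (by omega), sum_congr rfl hterm, sum_sub_distrib, ← mul_sum,
    sum_Icc_div_mul_succ_sub (fun k => c ^ (n + 1 - k) * b ^ k), hreflect]
  simp only [Nat.sub_self, pow_zero, Nat.add_sub_cancel, harmonic_zero]
  push_cast
  ring

theorem binomSum_Hml_two (a b : K) (n : ℕ) :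
    binomSum a b (fun k => (Hml k 2 : K)) n =
      Hml n 2 * (a + b) ^ n + 2 * ∑ k ∈ Icc 1 n,
        (a + b) ^ (n - k) * b ^ k * (((harmonic (k - 1) : K) - harmonic (n - k)) / k) := by
  induction n with
  | zero => simp [binomSum, Hml_two_eq_sum]
  | succ n ih =>
    have hdiff : a * binomSum a b (fun k => (Hml (k + 1) 2 : K) - Hml k 2) n =
        2 * binomSum a b (fun k => (harmonic (k - 1) : K)) (n + 1) / (n + 1) := by
      simpa [cast_Hml_two_succ, binomSum_const_mul, mul_div_assoc] using
        mul_binomSum_div_succ a b (fun k => 2 * (harmonic (k - 1) : K)) n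
    rw [binomSum_succ_eq_add_mul_fwdDiff, hdiff, binomSum_harmonic_pred, ih,
      sum_Icc_harmonic_sub_succ, cast_Hml_two_succ]
    ring

end MainIdentity

theorem stmt_5 (a b : ℂ) (n : ℕ) :
    ∑ k ∈ Finset.range (n + 1),
        (n.choose k : ℂ) * a ^ k * b ^ (n - k) * (Hml k 2 : ℂ) =
      (Hml n 2 : ℂ) * (a + b) ^ n +
        2 * ∑ k ∈ Finset.Icc 1 n,
          (a + b) ^ (n - k) * b ^ k * (((harm (k - 1) : ℂ) - (harm (n - k) : ℂ)) / (k : ℂ)) := by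
  rw [harm_eq_harmonic]
  exact binomSum_Hml_two a b n
end

section
/- For all integers n ≥ 1: Σ_{k=0}^{n} C(n,k) (−1)^k H_k^{(2)} = −H_n/n. -/
open Finset

/-!
Write `B f n = ∑ₖ C(n, k) (-1)ᵏ f k`. Pascal's rule gives
`B f (n + 1) = B f n - B (f ∘ succ) n`, so `B H⁽²⁾ (m + 1) = -B (fun k => 1 / (k + 1)²) m`.
Absorption, `C(m, k) / (k + 1) = C(m + 1, k + 1) / (m + 1)`, turns the latter into
`-B (fun k => 1 / k) (m + 1) / (m + 1)`, and the classical identity `B (fun k => 1 / k) n = -Hₙ`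
follows from the same Pascal recursion, since `B (fun k => 1 / (k + 1)) n = 1 / (n + 1)`
by absorption again.
-/

section AltBinomSum

variable {R : Type*} [CommRing R]

def altBinomSum (f : ℕ → R) (n : ℕ) : R :=
  ∑ k ∈ range (n + 1), (n.choose k : R) * (-1) ^ k * f k

theorem altBinomSum_sub (f g : ℕ → R) (n : ℕ) :
    altBinomSum (f - g) n = altBinomSum f n - altBinomSum g n := by
  simp only [altBinomSum, Pi.sub_apply, mul_sub, sum_sub_distrib]

theorem altBinomSum_succ (f : ℕ → R) (n : ℕ) :
    altBinomSum f (n + 1) = altBinomSum f n - altBinomSum (fun k => f (k + 1)) n := by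
  have := sum_choose_succ_mul (fun k _ => (-1 : R) ^ k * f k) n
  simp only [← mul_assoc, pow_succ, mul_neg, mul_one, neg_mul, sum_neg_distrib] at this
  rw [altBinomSum, altBinomSum, altBinomSum, this, sub_eq_add_neg]

theorem altBinomSum_const_succ (c : R) (n : ℕ) : altBinomSum (fun _ => c) (n + 1) = 0 := by
  rw [altBinomSum_succ, sub_self]

variable {K : Type*} [Field K] [CharZero K]

theorem succ_mul_altBinomSum_div_succ (g : ℕ → K) (m : ℕ) :
    (m + 1) * altBinomSum (fun k => g (k + 1) / (k + 1)) m = g 0 - altBinomSum g (m + 1) := by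
  rw [altBinomSum, altBinomSum, sum_range_succ' _ (m + 1), mul_sum, Nat.choose_zero_right,
    Nat.cast_one, pow_zero, one_mul, one_mul, sub_add_cancel_right, ← sum_neg_distrib]
  refine sum_congr rfl fun k _ => ?_
  have absorb : ((m + 1 : ℕ) : K) * m.choose k = (m + 1).choose (k + 1) * (k + 1 : ℕ) := by
    exact_mod_cast Nat.add_one_mul_choose_eq m k
  push_cast at absorb
  field_simp
  linear_combination (-1) ^ k * g (k + 1) * absorb

theorem altBinomSum_one_div_succ (m : ℕ) :
    altBinomSum (fun k => 1 / ((k : K) + 1)) m = 1 / (m + 1) := by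
  have h := succ_mul_altBinomSum_div_succ (fun _ => (1 : K)) m
  rw [altBinomSum_const_succ, sub_zero] at h
  rw [eq_div_iff (Nat.cast_add_one_ne_zero m), mul_comm, h]

end AltBinomSum

theorem harm_succ (n : ℕ) : harm (n + 1) = harm n + 1 / ((n : ℚ) + 1) := by
  rw [harm, harm, sum_Icc_succ_top (by omega), Nat.cast_succ]

theorem harm2_succ (n : ℕ) : harm2 (n + 1) = harm2 n + 1 / ((n : ℚ) + 1) ^ 2 := by
  rw [harm2, harm2, sum_Icc_succ_top (by omega), Nat.cast_succ]

theorem altBinomSum_inv (n : ℕ) : altBinomSum (fun k => (k : ℚ)⁻¹) n = -harm n := by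
  induction n with
  | zero => simp [altBinomSum, harm] -- the `k = 0` term is `(0 : ℚ)⁻¹ = 0`
  | succ n ih =>
    rw [altBinomSum_succ, ih, harm_succ, neg_add, sub_eq_add_neg]
    congr 2
    simpa only [Nat.cast_succ, one_div] using altBinomSum_one_div_succ (K := ℚ) n

theorem altBinomSum_one_div_succ_sq (m : ℕ) :
    altBinomSum (fun k => 1 / ((k : ℚ) + 1) ^ 2) m = harm (m + 1) / (m + 1) := by
  have h := succ_mul_altBinomSum_div_succ (fun k => (k : ℚ)⁻¹) m
  rw [altBinomSum_inv, Nat.cast_zero, inv_zero, zero_sub, neg_neg] at h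
  rw [eq_div_iff (by positivity), mul_comm, ← h]
  congr 2
  ext k
  push_cast
  field_simp

theorem stmt_8 (n : ℕ) (hn : 1 ≤ n) :
    ∑ k ∈ Finset.range (n + 1), (n.choose k : ℚ) * (-1) ^ k * harm2 k =
      -(harm n / (n : ℚ)) := by
  obtain ⟨m, rfl⟩ := Nat.exists_eq_add_of_le' hn
  have harm2_diff : (fun k => harm2 (k + 1)) - harm2 = fun k : ℕ => 1 / ((k : ℚ) + 1) ^ 2 := by
    ext k
    rw [Pi.sub_apply, harm2_succ, add_sub_cancel_left]
  change altBinomSum harm2 (m + 1) = _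
  rw [altBinomSum_succ, ← neg_sub, ← altBinomSum_sub, harm2_diff, altBinomSum_one_div_succ_sq,
    Nat.cast_succ]
end

section
/- For all integers n ≥ 0: Σ_{k=0}^{n} C(n,k) F_k H_k(2) = H_n(2)·F_{2n} + 2 Σ_{k=1}^{n} F_{2(n−k)} (H_{k−1} − H_{n−k})/k, where F_n are the Fibonacci numbers. -/
open Finset

/-!
Counting pairs `(a, b)` by their sum `s = a + b` and splitting `1 / (a b) = (1 / a + 1 / b) / s`
gives `H_k(2) = 2 ∑_{m<k} H_m / (m + 1)`.
The identity is then the image under Binet's formula of a polynomial identity in `x`: since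
`1 + φ = φ²` and `1 + ψ = ψ²`, evaluating at `x = φ, ψ` and taking `(· - ·) / √5` sends `x ^ k`
to `F_k` and `(1 + x) ^ m` to `F_{2m}`. By Pascal's rule the binomial sums
`S_n(a) = ∑_k C(n,k) x^k a_k` satisfy `S_{n+1}(a) = (1 + x) S_n(a) + x S_n(Δa)`, so the polynomial
identity follows by induction on `n`, once `x S_n(Δ H(2))`, with `Δ H_k(2) = 2 H_k / (k + 1)`, is
computed in closed form from `S_{n+1}(H)`.
-/

theorem Hml_succ_two (n : ℕ) :
    Hml (n + 1) 2 = ∑ s ∈ range n, ∑ p ∈ antidiagonal s, ((p.1 + 1 : ℚ) * (p.2 + 1))⁻¹ := by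
  rw [Hml, sum_sigma']
  symm
  refine sum_bij' (fun p _ => ![p.2.1 + 1, p.2.2 + 1])
    (fun k _ => ⟨k 0 + k 1 - 2, (k 0 - 1, k 1 - 1)⟩) ?_ ?_ ?_ ?_ ?_ <;>
  simp only [mem_sigma, mem_range, HasAntidiagonal.mem_antidiagonal, mem_filter,
    Fintype.mem_piFinset, mem_Icc, Fin.forall_fin_two, Fin.sum_univ_two, Fin.isValue,
    Matrix.cons_val_zero, Matrix.cons_val_one, Matrix.cons_val_fin_one, Fin.prod_univ_two,
    Sigma.forall, Prod.forall, Sigma.mk.injEq, Prod.mk.injEq, funext_iff, heq_eq_eq]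
  · intro s i j _
    omega
  · intro k _
    omega
  · intro s i j _
    omega
  · intro k _
    omega
  · intro s i j _
    push_cast
    rw [mul_inv, one_div, one_div]

theorem sum_antidiagonal_inv_succ_mul_inv_succ (s : ℕ) :
    ∑ p ∈ antidiagonal s, ((p.1 + 1 : ℚ) * (p.2 + 1))⁻¹ = 2 * harmonic (s + 1) / (s + 2) := by
  have partial_fractions : ∀ p ∈ antidiagonal s,
      ((p.1 + 1 : ℚ) * (p.2 + 1))⁻¹ = ((p.1 + 1 : ℚ)⁻¹ + (p.2 + 1 : ℚ)⁻¹) / (s + 2) := by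
    intro p hp
    rw [← HasAntidiagonal.mem_antidiagonal.mp hp]
    push_cast
    field_simp
    ring
  have harmonic_eq : ∑ p ∈ antidiagonal s, (p.1 + 1 : ℚ)⁻¹ = harmonic (s + 1) := by
    rw [Nat.sum_antidiagonal_eq_sum_range_succ_mk, harmonic]
    push_cast
    rfl
  have harmonic_eq' : ∑ p ∈ antidiagonal s, (p.2 + 1 : ℚ)⁻¹ = harmonic (s + 1) := by
    rw [← harmonic_eq, ← Nat.sum_antidiagonal_swap]
    rfl
  rw [sum_congr rfl partial_fractions, ← sum_div, sum_add_distrib, harmonic_eq, harmonic_eq']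
  ring

theorem Hml_two (n : ℕ) : Hml n 2 = ∑ m ∈ range n, 2 * harmonic m / (m + 1) := by
  cases n with
  | zero => simp [Hml]
  | succ n =>
    rw [Hml_succ_two, sum_range_succ', harmonic_zero, mul_zero, zero_div, add_zero]
    refine sum_congr rfl fun s _ => ?_
    rw [sum_antidiagonal_inv_succ_mul_inv_succ]
    push_cast
    ring

section CommSemiring

variable {R : Type*} [CommSemiring R]

theorem sum_range_succ_pow_sub_mul (y : R) (f : ℕ → R) (n : ℕ) :
    ∑ m ∈ range (n + 1), y ^ (n - m) * f m =
      y * ∑ m ∈ range n, y ^ (n - 1 - m) * f m + f n := by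
  rw [sum_range_succ, Nat.sub_self, pow_zero, one_mul, mul_sum]
  congr 1
  refine sum_congr rfl fun m hm => ?_
  rw [← mul_assoc, ← pow_succ', show n - 1 - m + 1 = n - m by grind]

theorem sum_range_choose_succ_mul (f : ℕ → R) (n : ℕ) :
    ∑ k ∈ range (n + 2), ((n + 1).choose k : R) * f k =
      ∑ k ∈ range (n + 1), (n.choose k : R) * (f k + f (k + 1)) := by
  have top : ∑ k ∈ range (n + 2), (n.choose k : R) * f k =
      ∑ k ∈ range (n + 1), (n.choose k : R) * f k := by
    simp [sum_range_succ _ (n + 1)]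
  simp only [mul_add, sum_add_distrib]
  rw [sum_range_succ', ← top, sum_range_succ' _ (n + 1)]
  simp only [Nat.choose_succ_succ, Nat.cast_add, add_mul, sum_add_distrib, Nat.choose_zero_right]
  ring

end CommSemiring

theorem sum_range_choose_succ_mul_pow_mul {R : Type*} [CommRing R] (x : R) (a : ℕ → R) (n : ℕ) :
    ∑ k ∈ range (n + 2), ((n + 1).choose k : R) * x ^ k * a k =
      (1 + x) * ∑ k ∈ range (n + 1), (n.choose k : R) * x ^ k * a k +
        x * ∑ k ∈ range (n + 1), (n.choose k : R) * x ^ k * (a (k + 1) - a k) := by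
  simp only [mul_assoc, sum_range_choose_succ_mul, mul_sum, ← sum_add_distrib]
  refine sum_congr rfl fun k _ => ?_
  ring

section Field

variable {K : Type*} [Field K] [CharZero K]

theorem Nat.cast_choose_div_succ (n k : ℕ) :
    (n.choose k : K) / (k + 1) = ((n + 1).choose (k + 1) : K) / (n + 1) := by
  rw [div_eq_div_iff (by norm_cast) (by norm_cast), mul_comm]
  exact_mod_cast Nat.add_one_mul_choose_eq n k

theorem sum_range_choose_mul_pow_succ_div (x : K) (n : ℕ) :
    ∑ k ∈ range (n + 1), (n.choose k : K) * x ^ (k + 1) / (k + 1) =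
      ((1 + x) ^ (n + 1) - 1) / (n + 1) := by
  have binom : (1 + x) ^ (n + 1) =
      ∑ k ∈ range (n + 1), ((n + 1).choose (k + 1) : K) * x ^ (k + 1) + 1 := by
    rw [add_comm, add_pow, sum_range_succ']
    simp [mul_comm]
  simp only [mul_div_right_comm _ (x ^ _), Nat.cast_choose_div_succ, binom, add_sub_cancel_right,
    sum_div]

theorem sum_range_choose_mul_pow_mul_harmonic (x : K) (n : ℕ) :
    ∑ k ∈ range (n + 1), (n.choose k : K) * x ^ k * harmonic k =
      (1 + x) ^ n * harmonic n - ∑ m ∈ range n, (1 + x) ^ (n - 1 - m) / (m + 1) := by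
  induction n with
  | zero => simp
  | succ n ih =>
    have step : x * ∑ k ∈ range (n + 1), (n.choose k : K) * x ^ k *
        ((harmonic (k + 1) : K) - harmonic k) = ((1 + x) ^ (n + 1) - 1) / (n + 1) := by
      rw [← sum_range_choose_mul_pow_succ_div, mul_sum]
      refine sum_congr rfl fun k _ => ?_
      push_cast [harmonic_succ]
      ring
    rw [sum_range_choose_succ_mul_pow_mul, ih, step, Nat.add_sub_cancel]
    simp only [div_eq_mul_inv _ ((_ : K) + 1), sum_range_succ_pow_sub_mul]
    push_cast [harmonic_succ]
    field_simp
    ring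

theorem sum_range_choose_succ_mul_pow_succ_div (x : K) (n : ℕ) :
    ∑ k ∈ range n, (n.choose (k + 1) : K) * x ^ (k + 1) / (k + 1) =
      ∑ m ∈ range n, ((1 + x) ^ (m + 1) - 1) / (m + 1) := by
  induction n with
  | zero => simp
  | succ n ih =>
    rw [sum_range_succ (fun m : ℕ => ((1 + x) ^ (m + 1) - 1) / (m + 1 : K)), ← ih,
      ← sum_range_choose_mul_pow_succ_div]
    simp only [Nat.choose_succ_succ, Nat.cast_add, add_mul, add_div, sum_add_distrib]
    rw [sum_range_succ (fun k : ℕ => (n.choose (k + 1) : K) * x ^ (k + 1) / (k + 1)) n]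
    simp only [Nat.choose_succ_self, Nat.cast_zero, zero_mul, zero_div, add_zero]
    ring

theorem sum_range_pow_sub_div_add_sum_range_pow_succ_div (y : K) (n : ℕ) :
    ∑ m ∈ range (n + 1), y ^ (n - m) / (m + 1) + ∑ m ∈ range (n + 1), y ^ (m + 1) / (m + 1) =
      (y ^ (n + 1) + 1) / (n + 1) +
        (n + 1) * ∑ j ∈ range n, y ^ (n - j) / ((j + 1) * (n - j : ℕ)) := by
  rw [sum_range_succ, sum_range_succ, ← sum_range_reflect (fun m => y ^ (m + 1) / (m + 1)) n,
    mul_sum]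
  have term : ∀ j ∈ range n, y ^ (n - j) / (j + 1) +
      y ^ (n - 1 - j + 1) / ((n - 1 - j : ℕ) + 1) =
        (n + 1) * (y ^ (n - j) / ((j + 1) * (n - j : ℕ))) := by
    intro j hj
    obtain ⟨d, rfl⟩ : ∃ d, n = j + d + 1 := ⟨n - j - 1, by grind⟩
    simp only [show j + d + 1 - j = d + 1 by omega, show j + d + 1 - 1 - j = d by omega]
    push_cast
    field_simp
    ring
  rw [← sum_congr rfl term, sum_add_distrib, Nat.sub_self, pow_zero]
  ring

theorem sum_range_choose_mul_pow_succ_mul_harmonic_div (x : K) (n : ℕ) :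
    ∑ k ∈ range (n + 1), (n.choose k : K) * x ^ (k + 1) * harmonic k / (k + 1) =
      ((1 + x) ^ (n + 1) + 1) * harmonic n / (n + 1) -
        ∑ j ∈ range n, (1 + x) ^ (n - j) / ((j + 1) * (n - j : ℕ)) := by
  have shift : ∑ k ∈ range (n + 1), (n.choose k : K) * x ^ (k + 1) * harmonic k / (k + 1) =
      (∑ k ∈ range (n + 2), ((n + 1).choose k : K) * x ^ k * harmonic k -
        ∑ k ∈ range (n + 1), ((n + 1).choose (k + 1) : K) * x ^ (k + 1) / (k + 1)) / (n + 1) := by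
    rw [sum_range_succ' _ (n + 1)]
    simp only [harmonic_zero, Rat.cast_zero, mul_zero, add_zero]
    rw [← sum_sub_distrib, sum_div]
    refine sum_congr rfl fun k _ => ?_
    have h := Nat.cast_choose_div_succ (K := K) n k
    push_cast [harmonic_succ]
    field_simp at h ⊢
    linear_combination x ^ (k + 1) * harmonic k * h
  rw [shift, sum_range_choose_mul_pow_mul_harmonic, sum_range_choose_succ_mul_pow_succ_div]
  have split : ∑ m ∈ range (n + 1), ((1 + x) ^ (m + 1) - 1) / (m + 1) =
      ∑ m ∈ range (n + 1), (1 + x) ^ (m + 1) / (m + 1) - harmonic (n + 1) := by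
    simp [sub_div, harmonic]
  have reflect := sum_range_pow_sub_div_add_sum_range_pow_succ_div (1 + x) n
  rw [Nat.add_sub_cancel, split]
  push_cast [harmonic_succ]
  field_simp at reflect ⊢
  linear_combination -reflect

theorem sum_range_pow_sub_mul_harmonic_sub_div (y : K) (n : ℕ) :
    ∑ j ∈ range (n + 1), y ^ (n - j) * (harmonic (n - j) / (j + 1)) =
      y * ∑ j ∈ range n, y ^ (n - 1 - j) * (harmonic (n - 1 - j) / (j + 1)) +
        ∑ j ∈ range n, y ^ (n - j) / ((j + 1) * (n - j : ℕ)) := by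
  rw [sum_range_succ, Nat.sub_self, harmonic_zero, Rat.cast_zero, zero_div, mul_zero, add_zero,
    mul_sum, ← sum_add_distrib]
  refine sum_congr rfl fun j hj => ?_
  obtain ⟨d, rfl⟩ : ∃ d, n = j + d + 1 := ⟨n - j - 1, by grind⟩
  simp only [show j + d + 1 - j = d + 1 by omega, show j + d + 1 - 1 - j = d by omega]
  push_cast [harmonic_succ]
  field_simp
  ring

theorem sum_range_choose_mul_pow_mul_Hml_two (x : K) (n : ℕ) :
    ∑ k ∈ range (n + 1), (n.choose k : K) * x ^ k * Hml k 2 =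
      (1 + x) ^ n * Hml n 2 +
        2 * ∑ j ∈ range n,
          (1 + x) ^ (n - 1 - j) * ((harmonic j - harmonic (n - 1 - j)) / (j + 1)) := by
  have Hml_two_succ (k : ℕ) : (Hml (k + 1) 2 : K) = Hml k 2 + 2 * harmonic k / (k + 1) := by
    rw [Hml_two, Hml_two, sum_range_succ]
    push_cast
    ring
  induction n with
  | zero => simp [Hml_two]
  | succ n ih =>
    have step : x * ∑ k ∈ range (n + 1), (n.choose k : K) * x ^ k *
        ((Hml (k + 1) 2 : K) - Hml k 2) =
          2 * ∑ k ∈ range (n + 1), (n.choose k : K) * x ^ (k + 1) * harmonic k / (k + 1) := by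
      simp only [Hml_two_succ, add_sub_cancel_left, mul_sum]
      refine sum_congr rfl fun k _ => ?_
      ring
    rw [sum_range_choose_succ_mul_pow_mul, ih, step,
      sum_range_choose_mul_pow_succ_mul_harmonic_div, Nat.add_sub_cancel]
    simp only [sub_div, mul_sub, sum_sub_distrib]
    rw [sum_range_succ_pow_sub_mul, sum_range_pow_sub_mul_harmonic_sub_div, Hml_two_succ]
    ring

end Field

open Real goldenRatio in
theorem sum_range_choose_mul_fib_mul_Hml_two (n : ℕ) :
    ∑ k ∈ range (n + 1), (n.choose k : ℝ) * Nat.fib k * Hml k 2 =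
      Hml n 2 * Nat.fib (2 * n) +
        2 * ∑ j ∈ range n, (Nat.fib (2 * (n - 1 - j)) : ℝ) *
          ((harmonic j - harmonic (n - 1 - j)) / (j + 1)) := by
  have fib_mul_sqrt_five (m : ℕ) : (Nat.fib m : ℝ) * √5 = φ ^ m - ψ ^ m := by
    rw [coe_fib_eq]
    field_simp
  have fib_two_mul_mul_sqrt_five (m : ℕ) :
      (Nat.fib (2 * m) : ℝ) * √5 = (1 + φ) ^ m - (1 + ψ) ^ m := by
    rw [fib_mul_sqrt_five, pow_mul, pow_mul, goldenRatio_sq, goldenConj_sq, add_comm 1, add_comm 1]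
  refine mul_right_cancel₀ (by positivity : √5 ≠ 0) ?_
  have lhs : (∑ k ∈ range (n + 1), (n.choose k : ℝ) * Nat.fib k * Hml k 2) * √5 =
      ∑ k ∈ range (n + 1), (n.choose k : ℝ) * φ ^ k * Hml k 2 -
        ∑ k ∈ range (n + 1), (n.choose k : ℝ) * ψ ^ k * Hml k 2 := by
    rw [sum_mul, ← sum_sub_distrib]
    refine sum_congr rfl fun k _ => ?_
    linear_combination (n.choose k * Hml k 2 : ℝ) * fib_mul_sqrt_five k
  have rhs : (∑ j ∈ range n, (Nat.fib (2 * (n - 1 - j)) : ℝ) *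
        ((harmonic j - harmonic (n - 1 - j)) / (j + 1))) * √5 =
      ∑ j ∈ range n, (1 + φ) ^ (n - 1 - j) * ((harmonic j - harmonic (n - 1 - j)) / (j + 1)) -
        ∑ j ∈ range n, (1 + ψ) ^ (n - 1 - j) *
          ((harmonic j - harmonic (n - 1 - j)) / (j + 1)) := by
    rw [sum_mul, ← sum_sub_distrib]
    refine sum_congr rfl fun j _ => ?_
    linear_combination ((harmonic j - harmonic (n - 1 - j)) / (j + 1) : ℝ) *
      fib_two_mul_mul_sqrt_five (n - 1 - j)
  linear_combination lhs + sum_range_choose_mul_pow_mul_Hml_two φ n -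
    sum_range_choose_mul_pow_mul_Hml_two ψ n - 2 * rhs -
    (Hml n 2 : ℝ) * fib_two_mul_mul_sqrt_five n

theorem stmt_10 (n : ℕ) :
    ∑ k ∈ Finset.range (n + 1), (n.choose k : ℚ) * (Nat.fib k : ℚ) * Hml k 2 =
      Hml n 2 * (Nat.fib (2 * n) : ℚ) +
        2 * ∑ k ∈ Finset.Icc 1 n,
          (Nat.fib (2 * (n - k)) : ℚ) * ((harm (k - 1) - harm (n - k)) / (k : ℚ)) := by
  have reindex :
      ∑ k ∈ Icc 1 n, (Nat.fib (2 * (n - k)) : ℚ) * ((harm (k - 1) - harm (n - k)) / k) =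
      ∑ j ∈ range n, (Nat.fib (2 * (n - 1 - j)) : ℚ) *
        ((harmonic j - harmonic (n - 1 - j)) / (j + 1)) := by
    rw [range_eq_Ico, ← Ico_add_one_right_eq_Icc, ← sum_Ico_add' _ 0 n 1]
    refine sum_congr rfl fun j _ => ?_
    simp [harm, harmonic_eq_sum_Icc, Nat.sub_sub, add_comm 1]
  rw [reindex]
  exact_mod_cast sum_range_choose_mul_fib_mul_Hml_two n
end

section
/- For all integers n ≥ 0 and p ≥ 0: Σ_{k=1}^{n} (1/2^{2k})·C(2(k+p), k+p)·C(k+p, k)·(O_{k+p} − O_p) = (1/2^{2n+1})·((p+1)/(2p+1))·C(2(n+p+1), n+p+1)·C(n+p+1, n)·(O_{n+p+1} − O_{p+1}). -/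
open Finset

/-! The closed form is proved by telescoping: it grows from `n` to `n + 1` by exactly the
`(n + 1)`-st summand. Expressing every binomial coefficient at `n + 1` through those at `n`,
and `O_{m+1} = O_m + 1/(2m+1)`, turns this into an identity of rational functions. -/

section BinomialRatios

variable {K : Type*} [Field K] [CharZero K]

theorem cast_add_choose_succ_right (k m : ℕ) :
    ((k + m + 1).choose (k + 1) : K) = (k + m + 1).choose k * (m + 1) / (k + 1) := by
  rw [eq_div_iff (Nat.cast_add_one_ne_zero k)]
  have h := Nat.choose_succ_right_eq (k + m + 1) k
  rw [show k + m + 1 - k = m + 1 by omega] at h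
  exact_mod_cast h

theorem cast_succ_choose_succ (n k : ℕ) :
    ((n + 1).choose (k + 1) : K) = (n + 1) * n.choose k / (k + 1) := by
  rw [eq_div_iff (Nat.cast_add_one_ne_zero k)]
  exact_mod_cast (Nat.add_one_mul_choose_eq n k).symm

theorem cast_centralBinom_succ (n : ℕ) :
    ((2 * (n + 1)).choose (n + 1) : K) = 2 * (2 * n + 1) * (2 * n).choose n / (n + 1) := by
  rw [eq_div_iff (Nat.cast_add_one_ne_zero n), mul_comm]
  exact_mod_cast Nat.succ_mul_centralBinom_succ n

end BinomialRatios

theorem oddharm_succ (n : ℕ) : oddharm (n + 1) = oddharm n + 1 / (2 * n + 1) := by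
  rw [oddharm, Finset.sum_Icc_succ_top (by omega), ← oddharm]
  push_cast
  ring

def oddharmSummand (p k : ℕ) : ℚ :=
  (1 / 2 ^ (2 * k) : ℚ) * ((2 * (k + p)).choose (k + p) : ℚ) *
    ((k + p).choose k : ℚ) * (oddharm (k + p) - oddharm p)

def oddharmClosedForm (p n : ℕ) : ℚ :=
  (1 / 2 ^ (2 * n + 1) : ℚ) * (((p : ℚ) + 1) / (2 * (p : ℚ) + 1)) *
    ((2 * (n + p + 1)).choose (n + p + 1) : ℚ) * ((n + p + 1).choose n : ℚ) *
    (oddharm (n + p + 1) - oddharm (p + 1))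

theorem oddharmClosedForm_succ (p n : ℕ) :
    oddharmClosedForm p (n + 1) = oddharmClosedForm p n + oddharmSummand p (n + 1) := by
  have hm : n + 1 + p = n + p + 1 := by omega
  simp only [oddharmClosedForm, oddharmSummand, hm]
  rw [cast_centralBinom_succ, cast_succ_choose_succ, cast_add_choose_succ_right,
    oddharm_succ (n + p + 1), oddharm_succ p]
  push_cast
  field_simp
  ring

theorem stmt_18 (n p : ℕ) :
    ∑ k ∈ Finset.Icc 1 n,
        (1 / 2 ^ (2 * k) : ℚ) * ((2 * (k + p)).choose (k + p) : ℚ) *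
          ((k + p).choose k : ℚ) * (oddharm (k + p) - oddharm p) =
      (1 / 2 ^ (2 * n + 1) : ℚ) * (((p : ℚ) + 1) / (2 * (p : ℚ) + 1)) *
        ((2 * (n + p + 1)).choose (n + p + 1) : ℚ) * ((n + p + 1).choose n : ℚ) *
        (oddharm (n + p + 1) - oddharm (p + 1)) := by
  show ∑ k ∈ Finset.Icc 1 n, oddharmSummand p k = oddharmClosedForm p n
  induction n with
  | zero => simp [oddharmClosedForm]
  | succ n ih => rw [Finset.sum_Icc_succ_top (by omega), ih, oddharmClosedForm_succ]
end
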